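/- In a rotationally asymmetric configuration of distinct points on a circle, if a point r is a confused leader (i.e., r is the true leader in exactly one of the two configurations C_0(r) — antipodal position of r empty — and C_1(r) — antipodal position occupied), then r is the true leader in C_0(r) and not in C_1(r). -/

import Mathlib

open Real

/-- Normalize a real number into `[0, 2π)` (representing an angle on the circle). -/
noncomputable def norm2pi (x : ℝ) : ℝ := (2 * π) * Int.fract (x / (2 * π))

/-- Clockwise angular distance from `a` to `b`, in `[0, 2π)`. -/
noncomputable def cwAngle (a b : ℝ) : ℝ := norm2pi (b - a)

/-- A configuration: a finite set of angles, all lying in `[0, 2π)`. -/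
def OnCircle (s : Finset ℝ) : Prop := ∀ x ∈ s, 0 ≤ x ∧ x < 2 * π

/-- Rotation of a configuration by angle `θ`. -/
noncomputable def rotConf (s : Finset ℝ) (θ : ℝ) : Finset ℝ :=
  s.image (fun x => norm2pi (x + θ))

/-- Rotational asymmetry: no nontrivial rotation preserves the configuration. -/
def RotAsym (s : Finset ℝ) : Prop := ∀ θ ∈ Set.Ioo 0 (2 * π), rotConf s θ ≠ s

/-- The clockwise gap (angle) sequence of the point `r` in configuration `s`:
consecutive clockwise angular gaps starting at `r`. -/
noncomputable def angleSeq (s : Finset ℝ) (r : ℝ) : List ℝ :=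
  let l := ((s.erase r).image (fun x => cwAngle r x)).sort (· ≤ ·)
  List.zipWith (fun u v => u - v) (l ++ [2 * π]) (0 :: l)

/-- Strict lexicographic order on lists of reals. -/
def ListLexLt (l₁ l₂ : List ℝ) : Prop := List.Lex (· < ·) l₁ l₂

/-- `r` is the true leader of `s`: its angle sequence is lexicographically strictly
smaller than that of every other point. -/
def IsTrueLeader (s : Finset ℝ) (r : ℝ) : Prop :=
  r ∈ s ∧ ∀ x ∈ s, x ≠ r → ListLexLt (angleSeq s r) (angleSeq s x)

/-- The antipodal position of a point `r`. -/
noncomputable def antip (r : ℝ) : ℝ := norm2pi (r + π)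

/-- The configuration as seen from `r` assuming its antipodal position is empty. -/
noncomputable def confC0 (s : Finset ℝ) (r : ℝ) : Finset ℝ := s.erase (antip r)

/-- The configuration as seen from `r` assuming its antipodal position is occupied. -/
noncomputable def confC1 (s : Finset ℝ) (r : ℝ) : Finset ℝ := insert (antip r) s

/-- A confused leader: both possibilities `C₀(r)` and `C₁(r)` are rotationally
asymmetric, and `r` is the true leader in exactly one of them. -/
def ConfusedLeader (s : Finset ℝ) (r : ℝ) : Prop :=
  r ∈ s ∧ RotAsym (confC0 s r) ∧ RotAsym (confC1 s r) ∧
    Xor' (IsTrueLeader (confC0 s r) r) (IsTrueLeader (confC1 s r) r)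

/-- A sure leader: `r` is the true leader in every possible (rotationally
asymmetric) configuration among `C₀(r)`, `C₁(r)`. -/
def SureLeader (s : Finset ℝ) (r : ℝ) : Prop :=
  r ∈ s ∧ (RotAsym (confC0 s r) → IsTrueLeader (confC0 s r) r) ∧
    (RotAsym (confC1 s r) → IsTrueLeader (confC1 s r) r)

/-- An expected leader is a sure leader or a confused leader. -/
def ExpectedLeader (s : Finset ℝ) (r : ℝ) : Prop := SureLeader s r ∨ ConfusedLeader s r

/-- `r'` is the first clockwise neighbor of `r` in `s`. -/
def IsCwNeighbor (s : Finset ℝ) (r r' : ℝ) : Prop :=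
  r' ∈ s ∧ r' ≠ r ∧ ∀ x ∈ s, x ≠ r → cwAngle r r' ≤ cwAngle r x

/-!
Suppose `r` leads in `C₁ = C₀ ∪ {antip r}` but some `x` beats `r` in `C₀`. Compare the views from
`r` and `x` as sets of clockwise angles: adding the antipode inserts `π` into the view from `r` and
`cwAngle x (antip r)` into the view from `x`. For this to reverse the comparison, `π` must come no
later than the first difference `M` in `C₁` and no later than `cwAngle x (antip r)`; the latter
forces `r` to sit at angle `γ < π ≤ M` clockwise from `x`. As the views from `r` and `x` agree
below `M`, some point `z` sits at angle `γ` clockwise from `r`, and the view from `z` relates to the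
view from `r` as that from `r` to that from `x`: `z` beats `r` in `C₁` at `M - γ`. A tie in `C₀`
would be a rotational symmetry.
-/

lemma norm2pi_mem_Ico (x : ℝ) : norm2pi x ∈ Set.Ico 0 (2 * π) :=
  ⟨by unfold norm2pi; positivity,
    by simpa [norm2pi] using mul_lt_mul_of_pos_left (Int.fract_lt_one (x / (2 * π))) two_pi_pos⟩

@[simp]
lemma coe_norm2pi (x : ℝ) : ((norm2pi x : ℝ) : Angle) = x := by
  rw [Angle.angle_eq_iff_two_pi_dvd_sub]
  exact ⟨-⌊x / (2 * π)⌋, by rw [norm2pi, Int.fract]; field_simp; push_cast; ring⟩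

lemma eq_of_coe_angle_eq {x y : ℝ} (hx : x ∈ Set.Ico 0 (2 * π)) (hy : y ∈ Set.Ico 0 (2 * π))
    (h : (x : Angle) = y) : x = y := by
  have : Fact (0 < 2 * π) := ⟨two_pi_pos⟩
  rw [← zero_add (2 * π)] at hx hy
  exact (AddCircle.coe_eq_coe_iff_of_mem_Ico hx hy).mp h

lemma norm2pi_eq_iff {x y : ℝ} : norm2pi x = y ↔ y ∈ Set.Ico 0 (2 * π) ∧ (y : Angle) = x :=
  ⟨fun h => h ▸ ⟨norm2pi_mem_Ico x, coe_norm2pi x⟩,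
    fun ⟨hy, h⟩ => eq_of_coe_angle_eq (norm2pi_mem_Ico x) hy (by rw [h, coe_norm2pi])⟩

lemma norm2pi_eq_norm2pi_iff {x y : ℝ} : norm2pi x = norm2pi y ↔ (x : Angle) = y := by
  rw [norm2pi_eq_iff, coe_norm2pi]
  exact ⟨fun h => h.2.symm, fun h => ⟨norm2pi_mem_Ico y, h.symm⟩⟩

lemma cwAngle_mem_Ico (a b : ℝ) : cwAngle a b ∈ Set.Ico 0 (2 * π) := norm2pi_mem_Ico _

@[simp]
lemma coe_cwAngle (a b : ℝ) : ((cwAngle a b : ℝ) : Angle) = b - a := by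
  simp [cwAngle]

@[simp]
lemma coe_antip (a : ℝ) : ((antip a : ℝ) : Angle) = a + π := by
  simp [antip]

lemma cwAngle_eq_iff {a b θ : ℝ} :
    cwAngle a b = θ ↔ θ ∈ Set.Ico 0 (2 * π) ∧ (θ : Angle) = b - a := by
  rw [cwAngle, norm2pi_eq_iff, Angle.coe_sub]

lemma cwAngle_pos {a b : ℝ} (ha : a ∈ Set.Ico 0 (2 * π)) (hb : b ∈ Set.Ico 0 (2 * π))
    (hab : a ≠ b) : 0 < cwAngle a b := by
  refine (cwAngle_mem_Ico a b).1.lt_of_ne' fun h => hab (eq_of_coe_angle_eq ha hb ?_)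
  have hba := coe_cwAngle a b
  rwa [h, Angle.coe_zero, eq_comm, sub_eq_zero, eq_comm] at hba

lemma eq_of_cwAngle_eq {a b c : ℝ} (hb : b ∈ Set.Ico 0 (2 * π)) (hc : c ∈ Set.Ico 0 (2 * π))
    (h : cwAngle a b = cwAngle a c) : b = c :=
  eq_of_coe_angle_eq hb hc (by simpa using congrArg ((↑) : ℝ → Angle) h)

lemma norm2pi_add_cwAngle (a : ℝ) {b : ℝ} (hb : b ∈ Set.Ico 0 (2 * π)) :
    norm2pi (a + cwAngle a b) = b :=
  norm2pi_eq_iff.mpr ⟨hb, by simp⟩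

lemma antip_ne_self (a : ℝ) : antip a ≠ a := by
  intro h
  have := congrArg ((↑) : ℝ → Angle) h
  simp [Angle.pi_ne_zero] at this

lemma cwAngle_antip_self (a : ℝ) : cwAngle a (antip a) = π :=
  cwAngle_eq_iff.mpr ⟨⟨pi_pos.le, by linarith [pi_pos]⟩, by simp⟩

lemma cwAngle_lt_pi_of_pi_le_cwAngle_antip {a b : ℝ} (h : π ≤ cwAngle a (antip b)) :
    cwAngle a b < π := by
  by_contra! hγ
  have hγ' := (cwAngle_mem_Ico a b).2
  have : cwAngle a (antip b) = cwAngle a b - π := by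
    refine cwAngle_eq_iff.mpr ⟨⟨by linarith, by linarith [pi_pos]⟩, ?_⟩
    rw [show cwAngle a b - π = cwAngle a b + π - 2 * π by ring, Angle.coe_sub, Angle.coe_two_pi,
      sub_zero, Angle.coe_add, coe_cwAngle, coe_antip]
    abel
  linarith [pi_pos]

lemma OnCircle.mem_Ico {t : Finset ℝ} (ht : OnCircle t) {a : ℝ} (ha : a ∈ t) :
    a ∈ Set.Ico 0 (2 * π) :=
  ht a ha

noncomputable def cwAngles (t : Finset ℝ) (a : ℝ) : Finset ℝ := (t.erase a).image (cwAngle a)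

section cwAngles

variable {t : Finset ℝ} {a b θ : ℝ}

lemma mem_cwAngles_iff (ht : OnCircle t) (hθ : θ ∈ Set.Ioo 0 (2 * π)) :
    θ ∈ cwAngles t a ↔ norm2pi (a + θ) ∈ t := by
  constructor
  · intro h
    obtain ⟨y, hy, rfl⟩ := Finset.mem_image.mp h
    have hy := Finset.mem_of_mem_erase hy
    rwa [norm2pi_add_cwAngle a (ht.mem_Ico hy)]
  · intro h
    refine Finset.mem_image.mpr ⟨_, Finset.mem_erase.mpr ⟨fun ha => hθ.1.ne' ?_, h⟩, ?_⟩
    · exact eq_of_coe_angle_eq (Set.Ioo_subset_Ico_self hθ) ⟨le_rfl, two_pi_pos⟩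
        (by simpa using (norm2pi_eq_iff.mp ha).2)
    · exact cwAngle_eq_iff.mpr ⟨Set.Ioo_subset_Ico_self hθ, by simp⟩

lemma mem_Ioo_of_mem_cwAngles (ht : OnCircle t) (ha : a ∈ Set.Ico 0 (2 * π))
    (h : θ ∈ cwAngles t a) : θ ∈ Set.Ioo 0 (2 * π) := by
  obtain ⟨y, hy, rfl⟩ := Finset.mem_image.mp h
  obtain ⟨hya, hy⟩ := Finset.mem_erase.mp hy
  exact ⟨cwAngle_pos ha (ht.mem_Ico hy) (Ne.symm hya), (cwAngle_mem_Ico a y).2⟩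

lemma card_cwAngles (ht : OnCircle t) (ha : a ∈ t) : (cwAngles t a).card = t.card - 1 := by
  rw [cwAngles, Finset.card_image_of_injOn, Finset.card_erase_of_mem ha]
  exact fun u hu v hv huv => eq_of_cwAngle_eq (ht.mem_Ico (Finset.mem_of_mem_erase hu))
    (ht.mem_Ico (Finset.mem_of_mem_erase hv)) huv

lemma cwAngles_insert (hab : a ≠ b) :
    cwAngles (insert b t) a = insert (cwAngle a b) (cwAngles t a) := by
  rw [cwAngles, Finset.erase_insert_of_ne (Ne.symm hab), Finset.image_insert, cwAngles]

lemma cwAngle_notMem_cwAngles (ht : OnCircle t) (hb : b ∈ Set.Ico 0 (2 * π)) (hbt : b ∉ t) :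
    cwAngle a b ∉ cwAngles t a := by
  intro h
  obtain ⟨y, hy, hyb⟩ := Finset.mem_image.mp h
  have hy := Finset.mem_of_mem_erase hy
  exact hbt (eq_of_cwAngle_eq (ht.mem_Ico hy) hb hyb ▸ hy)

lemma mem_cwAngles_iff_add_cwAngle (ht : OnCircle t) {ψ : ℝ} (hψ : ψ ∈ Set.Ioo 0 (2 * π))
    (hγψ : cwAngle a b + ψ ∈ Set.Ioo 0 (2 * π)) :
    ψ ∈ cwAngles t b ↔ cwAngle a b + ψ ∈ cwAngles t a := by
  rw [mem_cwAngles_iff ht hψ, mem_cwAngles_iff ht hγψ, norm2pi_eq_norm2pi_iff.mpr]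
  simp only [Angle.coe_add, coe_cwAngle]
  abel

lemma not_rotAsym_of_cwAngles_eq (ht : OnCircle t) (ha : a ∈ t) (hb : b ∈ t) (hab : a ≠ b)
    (h : cwAngles t a = cwAngles t b) : ¬ RotAsym t := by
  have hθ : cwAngle a b ∈ Set.Ioo 0 (2 * π) :=
    ⟨cwAngle_pos (ht.mem_Ico ha) (ht.mem_Ico hb) hab, (cwAngle_mem_Ico a b).2⟩
  refine fun hasym => hasym _ hθ (Finset.eq_of_subset_of_card_le ?_ ?_)
  · intro w hw
    obtain ⟨z, hz, rfl⟩ := Finset.mem_image.mp hw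
    obtain rfl | hza := eq_or_ne z a
    · rwa [norm2pi_add_cwAngle z (ht.mem_Ico hb)]
    have hψ := Finset.mem_image_of_mem (cwAngle a) (Finset.mem_erase.mpr ⟨hza, hz⟩)
    rw [← cwAngles] at hψ
    have hψ' := mem_Ioo_of_mem_cwAngles ht (ht.mem_Ico ha) hψ
    rw [h, mem_cwAngles_iff ht hψ'] at hψ
    rwa [norm2pi_eq_norm2pi_iff.mpr (by simp only [Angle.coe_add, coe_cwAngle]; abel :
      ((z + cwAngle a b : ℝ) : Angle) = ↑(b + cwAngle a z))]
  · rw [rotConf, Finset.card_image_of_injOn]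
    intro u hu v hv huv
    exact eq_of_coe_angle_eq (ht.mem_Ico hu) (ht.mem_Ico hv) (by
      simpa using norm2pi_eq_norm2pi_iff.mp huv)

end cwAngles

section FirstDiff

variable {α : Type*} [LinearOrder α]

def IsFirstDiff (A B : Finset α) (θ : α) : Prop :=
  θ ∈ A ∧ θ ∉ B ∧ ∀ ψ < θ, (ψ ∈ A ↔ ψ ∈ B)

variable {A B : Finset α} {θ θ' : α}

lemma IsFirstDiff.asymm (h : IsFirstDiff A B θ) (h' : IsFirstDiff B A θ') : False := by
  obtain hlt | rfl | hlt := lt_trichotomy θ θ'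
  · exact h.2.1 ((h'.2.2 θ hlt).mpr h.1)
  · exact h.2.1 h'.1
  · exact h'.2.1 ((h.2.2 θ' hlt).mpr h'.1)

lemma exists_isFirstDiff_of_ne (h : A ≠ B) :
    (∃ θ, IsFirstDiff A B θ) ∨ ∃ θ, IsFirstDiff B A θ := by
  have hne : (symmDiff A B).Nonempty := by
    rwa [Finset.nonempty_iff_ne_empty, Ne, Finset.symmDiff_eq_empty]
  have hmin := Finset.min'_mem _ hne
  have hagree : ∀ ψ < (symmDiff A B).min' hne, (ψ ∈ A ↔ ψ ∈ B) := fun ψ hψ => by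
    by_contra hc
    exact (Finset.min'_le _ ψ (Finset.mem_symmDiff.mpr (by tauto))).not_gt hψ
  rcases Finset.mem_symmDiff.mp hmin with ⟨hA, hB⟩ | ⟨hB, hA⟩
  · exact .inl ⟨_, hA, hB, hagree⟩
  · exact .inr ⟨_, hB, hA, fun ψ hψ => (hagree ψ hψ).symm⟩

lemma IsFirstDiff.le_of_insert {a b m M : α} (hm : IsFirstDiff B A m)
    (hM : IsFirstDiff (insert a A) (insert b B) M) (hb : b ∉ B) :
    a ≤ M ∧ a ≤ b := by
  have hm_eq : m < M → m = a := fun hlt => by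
    have := (hM.2.2 m hlt).mpr (Finset.mem_insert_of_mem hm.1)
    exact (Finset.mem_insert.mp this).resolve_right hm.2.1
  have hagree : ∀ ψ ∈ A, ψ ∉ B → m ≤ ψ := fun ψ hψA hψB =>
    le_of_not_gt fun hlt => hψB ((hm.2.2 ψ hlt).mpr hψA)
  have haM : a ≤ M := by
    by_contra! hMa
    have hMA : M ∈ A := (Finset.mem_insert.mp hM.1).resolve_left hMa.ne
    have hmM := (hagree M hMA fun h => hM.2.1 (Finset.mem_insert_of_mem h)).lt_of_ne
      fun h => hm.2.1 (h ▸ hMA)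
    exact hMa.not_gt (by rwa [hm_eq hmM] at hmM)
  refine ⟨haM, le_of_not_gt fun hba => ?_⟩
  have hbA : b ∈ A := ((Finset.mem_insert.mp ((hM.2.2 b (hba.trans_le haM)).mpr
    (Finset.mem_insert_self b B))).resolve_left hba.ne)
  have hmb := (hagree b hbA hb).lt_of_ne fun h => hm.2.1 (h ▸ hbA)
  exact (hmb.trans hba).ne (hm_eq (hmb.trans (hba.trans_le haM)))

lemma List.exists_firstDiff_of_lex {u v : List α} (h : List.Lex (· < ·) u v)
    (hu : u.Pairwise (· < ·)) (hv : v.Pairwise (· < ·)) (hlen : u.length = v.length) :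
    ∃ θ ∈ u, θ ∉ v ∧ ∀ ψ < θ, (ψ ∈ u ↔ ψ ∈ v) := by
  induction h with
  | nil => simp at hlen
  | @cons a l₁ l₂ _ ih =>
    rw [List.pairwise_cons] at hu hv
    obtain ⟨θ, hθ₁, hθ₂, hagree⟩ := ih hu.2 hv.2 (by simpa using hlen)
    have haθ := hu.1 θ hθ₁
    refine ⟨θ, List.mem_cons_of_mem a hθ₁, ?_, fun ψ hψ => ?_⟩
    · simp [hθ₂, haθ.ne']
    · simp [hagree ψ hψ]
  | @rel a₁ l₁ a₂ l₂ hlt =>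
    rw [List.pairwise_cons] at hu hv
    refine ⟨a₁, List.mem_cons_self, ?_, fun ψ hψ => ?_⟩
    · simp only [List.mem_cons, not_or]
      exact ⟨hlt.ne, fun h => (hv.1 a₁ h).not_gt hlt⟩
    · have h₁ : ψ ∉ l₁ := fun h => lt_asymm (hu.1 ψ h) hψ
      have h₂ : ψ ∉ l₂ := fun h => lt_asymm (hv.1 ψ h) (hψ.trans hlt)
      simp [h₁, h₂, hψ.ne, (hψ.trans hlt).ne]

lemma lex_sort_iff_exists_isFirstDiff (h : A.card = B.card) :
    List.Lex (· < ·) (A.sort (· ≤ ·)) (B.sort (· ≤ ·)) ↔ ∃ θ, IsFirstDiff A B θ := by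
  have key : ∀ {A B : Finset α}, A.card = B.card →
      List.Lex (· < ·) (A.sort (· ≤ ·)) (B.sort (· ≤ ·)) → ∃ θ, IsFirstDiff A B θ := by
    intro A B h hlex
    obtain ⟨θ, hθA, hθB, hagree⟩ := List.exists_firstDiff_of_lex hlex
      (Finset.sortedLT_sort A).pairwise (Finset.sortedLT_sort B).pairwise (by simp [h])
    simp only [Finset.mem_sort] at hθA hθB hagree
    exact ⟨θ, hθA, hθB, hagree⟩
  refine ⟨key h, fun ⟨θ, hθ⟩ => ?_⟩
  rcases trichotomous_of (List.Lex (· < ·)) (A.sort (· ≤ ·)) (B.sort (· ≤ ·)) with hlt | heq | hgt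
  · exact hlt
  · have hAB : A = B := by rw [← Finset.sort_toFinset A (· ≤ ·), heq, Finset.sort_toFinset]
    exact (hθ.2.1 (hAB ▸ hθ.1)).elim
  · obtain ⟨θ', hθ'⟩ := key h.symm hgt
    exact (hθ.asymm hθ').elim

end FirstDiff

def gapSeq {α : Type*} [Sub α] (c e : α) (l : List α) : List α :=
  List.zipWith (· - ·) (l ++ [e]) (c :: l)

lemma lex_gapSeq_iff {α : Type*} [AddCommGroup α] [LinearOrder α] [IsOrderedAddMonoid α]
    {c e : α} {u v : List α} (hlen : u.length = v.length) :
    List.Lex (· < ·) (gapSeq c e u) (gapSeq c e v) ↔ List.Lex (· < ·) u v := by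
  induction u generalizing c v with
  | nil =>
    obtain rfl := List.eq_nil_of_length_eq_zero hlen.symm
    simp [gapSeq]
  | cons a u ih =>
    obtain ⟨b, v, rfl⟩ := List.exists_cons_of_length_eq_add_one hlen.symm
    simp only [gapSeq, List.cons_append, List.zipWith_cons_cons] at ih ⊢
    rw [List.cons_lex_cons_iff, List.cons_lex_cons_iff, sub_lt_sub_iff_right, sub_left_inj]
    constructor
    · rintro (h | ⟨rfl, h⟩)
      · exact .inl h
      · exact .inr ⟨rfl, (ih (by simpa using hlen)).mp h⟩
    · rintro (h | ⟨rfl, h⟩)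
      · exact .inl h
      · exact .inr ⟨rfl, (ih (by simpa using hlen)).mpr h⟩

lemma angleSeq_eq_gapSeq (t : Finset ℝ) (a : ℝ) :
    angleSeq t a = gapSeq 0 (2 * π) ((cwAngles t a).sort (· ≤ ·)) :=
  rfl

lemma listLexLt_angleSeq_iff {t : Finset ℝ} (ht : OnCircle t) {a b : ℝ} (ha : a ∈ t) (hb : b ∈ t) :
    ListLexLt (angleSeq t a) (angleSeq t b) ↔ ∃ θ, IsFirstDiff (cwAngles t a) (cwAngles t b) θ := by
  have hcard : (cwAngles t a).card = (cwAngles t b).card := by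
    rw [card_cwAngles ht ha, card_cwAngles ht hb]
  rw [ListLexLt, angleSeq_eq_gapSeq, angleSeq_eq_gapSeq, lex_gapSeq_iff (by simpa using hcard),
    lex_sort_iff_exists_isFirstDiff hcard]

lemma exists_isFirstDiff_of_cwAngle_lt {t : Finset ℝ} (ht : OnCircle t) {r x M : ℝ} (hr : r ∈ t)
    (hx : x ∈ t) (hxr : x ≠ r) (hM : IsFirstDiff (cwAngles t r) (cwAngles t x) M)
    (hγ : cwAngle x r < M) :
    ∃ z ∈ t, z ≠ r ∧ IsFirstDiff (cwAngles t z) (cwAngles t r) (M - cwAngle x r) := by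
  set γ := cwAngle x r
  have hγx : γ ∈ cwAngles t x := Finset.mem_image_of_mem _ (Finset.mem_erase.mpr ⟨hxr.symm, hr⟩)
  obtain ⟨z, hz, hrz⟩ := Finset.mem_image.mp ((hM.2.2 γ hγ).mpr hγx)
  obtain ⟨hzr, hz⟩ := Finset.mem_erase.mp hz
  have hMI := mem_Ioo_of_mem_cwAngles ht (ht.mem_Ico hr) hM.1
  have hγI := mem_Ioo_of_mem_cwAngles ht (ht.mem_Ico hx) hγx
  have hshift : ∀ ψ ∈ Set.Ioc 0 (M - γ),
      (ψ ∈ cwAngles t z ↔ γ + ψ ∈ cwAngles t r) ∧ (ψ ∈ cwAngles t r ↔ γ + ψ ∈ cwAngles t x) := by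
    rintro ψ ⟨hψ0, hψM⟩
    have hψ : ψ ∈ Set.Ioo 0 (2 * π) := ⟨hψ0, by linarith [hMI.2, hγI.1]⟩
    have hγψ : γ + ψ ∈ Set.Ioo 0 (2 * π) := ⟨by linarith [hγI.1], by linarith [hMI.2]⟩
    exact ⟨hrz ▸ mem_cwAngles_iff_add_cwAngle ht hψ (hrz ▸ hγψ),
      mem_cwAngles_iff_add_cwAngle ht hψ hγψ⟩
  have hMγ : M - γ ∈ Set.Ioc 0 (M - γ) := ⟨sub_pos.mpr hγ, le_rfl⟩
  refine ⟨z, hz, hzr, ?_, ?_, fun ψ hψ => ?_⟩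
  · rw [(hshift _ hMγ).1, add_sub_cancel]
    exact hM.1
  · rw [(hshift _ hMγ).2, add_sub_cancel]
    exact hM.2.1
  · rcases le_or_gt ψ 0 with hψ0 | hψ0
    · exact iff_of_false (fun h => (mem_Ioo_of_mem_cwAngles ht (ht.mem_Ico hz) h).1.not_ge hψ0)
        (fun h => (mem_Ioo_of_mem_cwAngles ht (ht.mem_Ico hr) h).1.not_ge hψ0)
    · rw [(hshift ψ ⟨hψ0, hψ.le⟩).1, (hshift ψ ⟨hψ0, hψ.le⟩).2]
      exact hM.2.2 _ (by linarith)

theorem OnCircle.isTrueLeader_of_insert_antip {P : Finset ℝ} (hP : OnCircle P) (hasym : RotAsym P)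
    {r : ℝ} (hq : antip r ∉ P) (h : IsTrueLeader (insert (antip r) P) r) : IsTrueLeader P r := by
  set C := insert (antip r) P
  have hC : OnCircle C := by
    intro y hy
    rcases Finset.mem_insert.mp hy with rfl | hy
    · exact norm2pi_mem_Ico _
    · exact hP y hy
  have hr : r ∈ P := (Finset.mem_insert.mp h.1).resolve_left (antip_ne_self r).symm
  refine ⟨hr, fun x hx hxr => ?_⟩
  rw [listLexLt_angleSeq_iff hP hr hx]
  by_cases heq : cwAngles P r = cwAngles P x
  · exact absurd hasym (not_rotAsym_of_cwAngles_eq hP hr hx hxr.symm heq)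
  refine (exists_isFirstDiff_of_ne heq).resolve_right fun ⟨m, hm⟩ => ?_
  have hxC : x ∈ C := Finset.mem_insert_of_mem hx
  obtain ⟨M, hM⟩ := (listLexLt_angleSeq_iff hC h.1 hxC).mp (h.2 x hxC hxr)
  have hMins := hM
  rw [cwAngles_insert (antip_ne_self r).symm, cwAngles_insert (ne_of_mem_of_not_mem hx hq),
    cwAngle_antip_self] at hMins
  obtain ⟨hπM, hπδ⟩ := hm.le_of_insert hMins (cwAngle_notMem_cwAngles hP (norm2pi_mem_Ico _) hq)
  obtain ⟨z, hzC, hzr, hz⟩ := exists_isFirstDiff_of_cwAngle_lt hC h.1 hxC hxr hM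
    ((cwAngle_lt_pi_of_pi_le_cwAngle_antip hπδ).trans_le hπM)
  obtain ⟨M', hrz⟩ := (listLexLt_angleSeq_iff hC h.1 hzC).mp (h.2 z hzC hzr)
  exact hz.asymm hrz

theorem confused_leader_true_in_C0_general
    (s : Finset ℝ) (hcirc : OnCircle s)
    (r : ℝ) (hr : ConfusedLeader s r) :
    IsTrueLeader (confC0 s r) r ∧ ¬ IsTrueLeader (confC1 s r) r := by
  obtain ⟨-, hasym₀, -, h | ⟨h₁, h₀⟩⟩ := hr
  · exact h
  have hC₀ : OnCircle (confC0 s r) := fun y hy => hcirc y (Finset.mem_of_mem_erase hy)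
  have hC₁ : insert (antip r) (confC0 s r) = confC1 s r := by
    ext y
    by_cases hy : y = antip r <;> simp [confC0, confC1, hy]
  exact absurd (hC₀.isTrueLeader_of_insert_antip hasym₀ (Finset.notMem_erase _ _) (hC₁ ▸ h₁)) h₀

/-- a confused leader is the true leader in `C₀(r)` (antipodal empty)
and not in `C₁(r)` (antipodal occupied). -/
theorem confused_leader_true_in_C0
    (s : Finset ℝ) (hcirc : OnCircle s) (hasym : RotAsym s)
    (r : ℝ) (hr : ConfusedLeader s r) :
    IsTrueLeader (confC0 s r) r ∧ ¬ IsTrueLeader (confC1 s r) r :=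
  confused_leader_true_in_C0_general s hcirc r hr
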